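/- arXiv:1610.03765 — 5 statements merged into one kernel-verified Lean document; each statement's English description precedes it below -/
import Mathlib

section
/- For any Lie algebra L over a field and any bilinear map f : L × L → L that is a derivation in each argument (i.e., f([x,y],z) = [x, f(y,z)] + [f(x,z), y] and f(x,[y,z]) = [f(x,y), z] + [y, f(x,z)] for all x,y,z ∈ L), the identity [f(x,y),[u,v]] + [[x,v], f(u,y)] = [[x,y], f(u,v)] + [f(x,v),[u,y]] holds for all x, y, u, v ∈ L. -/
theorem stmt_0 {K : Type*} [Field K] {L : Type*} [LieRing L] [LieAlgebra K L]
    (f : L →ₗ[K] L →ₗ[K] L)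
    (hf1 : ∀ x y z : L, f ⁅x, y⁆ z = ⁅x, f y z⁆ + ⁅f x z, y⁆)
    (hf2 : ∀ x y z : L, f x ⁅y, z⁆ = ⁅f x y, z⁆ + ⁅y, f x z⁆) :
    ∀ x y u v : L,
      ⁅f x y, ⁅u, v⁆⁆ + ⁅⁅x, v⁆, f u y⁆ = ⁅⁅x, y⁆, f u v⁆ + ⁅f x v, ⁅u, y⁆⁆ := by
  intro x y u v
  have key : ⁅x, f u ⁅y,v⁆⁆ + ⁅f x ⁅y,v⁆, u⁆ = ⁅f ⁅x,u⁆ y, v⁆ + ⁅y, f ⁅x,u⁆ v⁆ := by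
    rw [← hf1, ← hf2]
  simp only [hf1, hf2] at key
  have j1 := lie_jacobi x v (f u y)
  have j2 := lie_jacobi (f x y) u v
  rw [show (⁅v, ⁅f u y, x⁆⁆ : L) = -⁅v, ⁅x, f u y⁆⁆ by
    rw [← lie_skew x (f u y), lie_neg, neg_neg]] at j1
  rw [show (⁅u, ⁅v, f x y⁆⁆ : L) = -⁅u, ⁅f x y, v⁆⁆ by
    rw [← lie_skew (f x y) v, lie_neg, neg_neg]] at j2
  rw [show (⁅f x v, ⁅u, y⁆⁆ : L) = -⁅f x v, ⁅y, u⁆⁆ by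
    rw [← lie_skew y u, lie_neg, neg_neg]]
  simp only [lie_lie, lie_add, add_lie, lie_sub, sub_lie] at key ⊢
  rw [← lie_skew v u] at key
  simp only [lie_neg, neg_lie, neg_neg] at key
  linear_combination (norm := abel) j1 - key - j2
end

section
/- Let f be a biderivation of gl_n(ℂ) (n ≥ 2). Then f(x, I_n) = 0 and f(I_n, y) = 0 for all trace-zero matrices x, y ∈ sl_n(ℂ). -/
/-!
Putting `1` into one slot of a biderivation gives an element that commutes with everything,
since `1` commutes with everything. Hence the derivation rule makes `f [a, b] 1` and `f 1 [a, b]`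
vanish, and a trace-zero matrix is a linear combination of commutators of matrix units.
-/

namespace Matrix

variable {R n : Type*} [CommRing R] [Fintype n] [DecidableEq n]

-- `[E_ik, E_kj] = E_ij - δ_ij E_kk`, so summing against `x i j` leaves `x - trace x • E_kk`.
theorem sub_trace_smul_single_eq_sum_commutator (x : Matrix n n R) (k : n) :
    x - x.trace • single k k 1 = ∑ i, ∑ j, x i j •
      (single i k (1 : R) * single k j 1 - single k j 1 * single i k 1) := by
  have hdiag : ∑ i, ∑ j, x i j • (if j = i then single k k (1 : R) else 0)
      = x.trace • single k k 1 := by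
    simp only [smul_ite, smul_zero, Finset.sum_ite_eq', Finset.mem_univ, if_true,
      ← Finset.sum_smul, trace, diag]
  have hswap (i j : n) :
      single k j (1 : R) * single i k 1 = if j = i then single k k 1 else 0 := by
    split_ifs with h
    · rw [h, single_mul_single_same, mul_one]
    · exact single_mul_single_of_ne (h := h) ..
  simp only [single_mul_single_same, hswap, mul_one, smul_sub, Finset.sum_sub_distrib,
    smul_single, smul_eq_mul, hdiag, ← matrix_eq_sum_single x]

theorem mem_span_commutators_of_trace_eq_zero {x : Matrix n n R} (hx : x.trace = 0) :
    x ∈ Submodule.span R {c | ∃ a b : Matrix n n R, a * b - b * a = c} := by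
  rcases isEmpty_or_nonempty n with _ | ⟨⟨k⟩⟩
  · rw [Subsingleton.elim x 0]
    exact Submodule.zero_mem _
  have hx' := sub_trace_smul_single_eq_sum_commutator x k
  rw [hx, zero_smul, sub_zero] at hx'
  rw [hx']
  exact Submodule.sum_mem _ fun i _ => Submodule.sum_mem _ fun j _ =>
    Submodule.smul_mem _ _ (Submodule.subset_span ⟨_, _, rfl⟩)

end Matrix

section Biderivation

variable {R A : Type*} [CommRing R] [Ring A] [Module R A] (f : A →ₗ[R] A →ₗ[R] A)

theorem commute_biderivation_apply_one_right
    (hright : ∀ x y z : A, f x (y * z - z * y) = (f x y * z - z * f x y) + (y * f x z - f x z * y))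
    (y z : A) : f y 1 * z = z * f y 1 := by
  have h := hright y 1 z
  simp only [one_mul, mul_one, sub_self, map_zero, add_zero] at h
  exact sub_eq_zero.mp h.symm

theorem commute_biderivation_apply_one_left
    (hleft : ∀ x y z : A, f (x * y - y * x) z = (x * f y z - f y z * x) + (f x z * y - y * f x z))
    (z y : A) : f 1 z * y = y * f 1 z := by
  have h := hleft 1 y z
  simp only [one_mul, mul_one, sub_self, map_zero, LinearMap.zero_apply, zero_add] at h
  exact sub_eq_zero.mp h.symm

theorem biderivation_apply_commutator_one
    (hleft : ∀ x y z : A, f (x * y - y * x) z = (x * f y z - f y z * x) + (f x z * y - y * f x z))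
    (hright : ∀ x y z : A, f x (y * z - z * y) = (f x y * z - z * f x y) + (y * f x z - f x z * y))
    (a b : A) : f (a * b - b * a) 1 = 0 := by
  rw [hleft, commute_biderivation_apply_one_right f hright b a,
    commute_biderivation_apply_one_right f hright a b, sub_self, sub_self, add_zero]

theorem biderivation_apply_one_commutator
    (hleft : ∀ x y z : A, f (x * y - y * x) z = (x * f y z - f y z * x) + (f x z * y - y * f x z))
    (hright : ∀ x y z : A, f x (y * z - z * y) = (f x y * z - z * f x y) + (y * f x z - f x z * y))
    (a b : A) : f 1 (a * b - b * a) = 0 := by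
  rw [hright, commute_biderivation_apply_one_left f hleft a b,
    commute_biderivation_apply_one_left f hleft b a, sub_self, sub_self, add_zero]

theorem span_commutators_le_ker_biderivation_one
    (hleft : ∀ x y z : A, f (x * y - y * x) z = (x * f y z - f y z * x) + (f x z * y - y * f x z))
    (hright : ∀ x y z : A, f x (y * z - z * y) = (f x y * z - z * f x y) + (y * f x z - f x z * y)) :
    Submodule.span R {c | ∃ a b : A, a * b - b * a = c} ≤
      LinearMap.ker (f.flip 1) ⊓ LinearMap.ker (f 1) := by
  rw [Submodule.span_le]
  rintro _ ⟨a, b, rfl⟩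
  exact ⟨biderivation_apply_commutator_one f hleft hright a b,
    biderivation_apply_one_commutator f hleft hright a b⟩

end Biderivation

theorem stmt_11_general (n : ℕ)
    (f : Matrix (Fin n) (Fin n) ℂ →ₗ[ℂ] Matrix (Fin n) (Fin n) ℂ →ₗ[ℂ] Matrix (Fin n) (Fin n) ℂ)
    (hf1 : ∀ x y z : Matrix (Fin n) (Fin n) ℂ,
      f (x * y - y * x) z = (x * f y z - f y z * x) + (f x z * y - y * f x z))
    (hf2 : ∀ x y z : Matrix (Fin n) (Fin n) ℂ,
      f x (y * z - z * y) = (f x y * z - z * f x y) + (y * f x z - f x z * y)) :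
    ∀ x : Matrix (Fin n) (Fin n) ℂ, x.trace = 0 → f x 1 = 0 ∧ f 1 x = 0 := fun x hx =>
  span_commutators_le_ker_biderivation_one f hf1 hf2
    (Matrix.mem_span_commutators_of_trace_eq_zero hx)

theorem stmt_11 (n : ℕ) (hn : 2 ≤ n)
    (f : Matrix (Fin n) (Fin n) ℂ →ₗ[ℂ] Matrix (Fin n) (Fin n) ℂ →ₗ[ℂ] Matrix (Fin n) (Fin n) ℂ)
    (hf1 : ∀ x y z : Matrix (Fin n) (Fin n) ℂ,
      f (x * y - y * x) z = (x * f y z - f y z * x) + (f x z * y - y * f x z))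
    (hf2 : ∀ x y z : Matrix (Fin n) (Fin n) ℂ,
      f x (y * z - z * y) = (f x y * z - z * f x y) + (y * f x z - f x z * y)) :
    ∀ x : Matrix (Fin n) (Fin n) ℂ, x.trace = 0 → f x 1 = 0 ∧ f 1 x = 0 :=
  stmt_11_general n f hf1 hf2
end

section
/- Every biderivation f of gl_n(ℂ) (n ≥ 2) has the form f(x,y) = μ·tr(x)·tr(y)·I_n + λ·[x,y] for some complex numbers λ, μ. -/
/-!
Fixing one argument of a biderivation gives a derivation of `gl_n`, and every derivation of `gl_n`
is `x ↦ ⁅a, x⁆ + β tr(x) 1`: after removing the trace part, a traceless derivation agrees with an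
inner one on the diagonal units `E_pp`; once corrected there, it multiplies each `E_pq` by a scalar
`ω_pq` with `ω_pr = ω_pq + ω_qr`, which is the action of `ad` of a diagonal matrix.

Comparing the traces of the two resulting descriptions of `f x y` produces `μ tr(x) tr(y) 1`. What
remains is a bilinear `g` with `g x y = ⁅A y, x⁆ = ⁅C x, y⁆`. By invariance of the trace form, `A y`
commutes with everything that commutes with `y`; for a matrix unit this forces
`A E_kl ∈ span {1, E_kl}`, so `g (·, E_kl) = β_kl ⁅E_kl, ·⁆`, and computing `g (E_ij, E_kl)` both
ways makes all `β_kl` equal.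
-/

open Matrix

attribute [local instance] LieRing.ofAssociativeRing

variable {ι K : Type*} [Fintype ι] [DecidableEq ι] [Field K]

namespace Matrix

theorem single_one_mul_apply (X : Matrix ι ι K) (i j s t : ι) :
    (single i j (1 : K) * X) s t = if s = i then X j t else 0 := by
  split_ifs with h
  · subst h; simp
  · exact single_mul_apply_of_ne _ _ _ _ _ h _

theorem mul_single_one_apply (X : Matrix ι ι K) (i j s t : ι) :
    (X * single i j (1 : K)) s t = if t = j then X s i else 0 := by
  split_ifs with h
  · subst h; simp
  · exact mul_single_apply_of_ne _ _ _ _ _ h _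

theorem lie_single_apply (X : Matrix ι ι K) (i j s t : ι) :
    ⁅X, single i j (1 : K)⁆ s t = (if t = j then X s i else 0) - (if s = i then X j t else 0) := by
  rw [Ring.lie_def, sub_apply, mul_single_one_apply, single_one_mul_apply]

theorem single_lie_apply (X : Matrix ι ι K) (i j s t : ι) :
    ⁅single i j (1 : K), X⁆ s t = (if s = i then X j t else 0) - (if t = j then X s i else 0) := by
  rw [← lie_skew, neg_apply, lie_single_apply, neg_sub]

theorem single_lie_single (i j k l : ι) :
    ⁅single i j (1 : K), single k l (1 : K)⁆ =
      (if j = k then single i l 1 else 0) - (if l = i then single k j 1 else 0) := by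
  rw [Ring.lie_def]
  congr 1 <;> split_ifs with h <;> simp [h, single_mul_single_of_ne]

theorem lie_diagonal_single (d : ι → K) (i j : ι) :
    ⁅diagonal d, single i j (1 : K)⁆ = (d i - d j) • single i j 1 := by
  ext s t
  simp only [Ring.lie_def, sub_apply, smul_apply, single_apply, diagonal_mul, mul_diagonal]
  split_ifs <;> simp_all

theorem linearMap_ext_single {M : Type*} [AddCommGroup M] [Module K M]
    {f g : Matrix ι ι K →ₗ[K] M} (h : ∀ i j, f (single i j 1) = g (single i j 1)) : f = g :=
  ext_linearMap K fun i j => LinearMap.ext_ring (by simpa using h i j)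

theorem trace_lie_mul (a b c : Matrix ι ι K) : trace (⁅a, b⁆ * c) = trace (a * ⁅b, c⁆) := by
  simp only [Ring.lie_def, sub_mul, mul_sub, trace_sub, mul_assoc]
  rw [trace_mul_comm b, mul_assoc]

theorem lie_eq_zero_of_forall_lie_eq_lie {a y z : Matrix ι ι K} {c : Matrix ι ι K → Matrix ι ι K}
    (h : ∀ x, ⁅a, x⁆ = ⁅c x, y⁆) (hyz : ⁅y, z⁆ = 0) : ⁅a, z⁆ = 0 := by
  refine ext_iff_trace_mul_left.mpr fun x => ?_
  -- `tr (x ⁅a, z⁆) = -tr (⁅a, x⁆ z) = -tr (⁅c x, y⁆ z) = -tr (c x ⁅y, z⁆)`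
  rw [mul_zero, trace_zero, ← trace_lie_mul, ← lie_skew, neg_mul, trace_neg, h, trace_lie_mul,
    hyz, mul_zero, trace_zero, neg_zero]

theorem exists_eq_smul_one_add_smul_single_of_mem_centralizer [Nontrivial ι] {a : Matrix ι ι K}
    {k l : ι} (ha : a ∈ Set.centralizer (Set.centralizer {single k l (1 : K)})) :
    ∃ α β : K, a = α • 1 + β • single k l 1 := by
  have key : ∀ i j, i ≠ l → j ≠ k → ∀ s t,
      (if t = j then a s i else 0) = (if s = i then a j t else 0) := by
    intro i j hil hjk s t
    have hmem : single i j (1 : K) ∈ Set.centralizer {single k l (1 : K)} := by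
      simp only [Set.mem_centralizer_iff, Set.mem_singleton_iff, forall_eq]
      rw [single_mul_single_of_ne _ _ _ _ (Ne.symm hil), single_mul_single_of_ne _ _ _ _ hjk]
    simpa [single_one_mul_apply, mul_single_one_apply] using
      congr($(Set.mem_centralizer_iff.mp ha _ hmem) s t).symm
  obtain ⟨i₀, hi₀⟩ := exists_ne l
  obtain ⟨j₀, hj₀⟩ := exists_ne k
  have off_col : ∀ s t, s ≠ t → t ≠ l → a s t = 0 := fun s t hst htl => by
    simpa [hst] using key t j₀ htl hj₀ s j₀
  have off_row : ∀ s t, s ≠ t → s ≠ k → a s t = 0 := fun s t hst hsk => by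
    simpa [Ne.symm hst] using (key i₀ s hi₀ hsk i₀ t).symm
  have diag : ∀ i j, i ≠ l → j ≠ k → a i i = a j j := fun i j hil hjk => by
    simpa using key i j hil hjk i j
  refine ⟨a j₀ j₀, a k l - if k = l then a j₀ j₀ else 0, ?_⟩
  ext s t
  simp only [add_apply, smul_apply, one_apply, single_apply, smul_eq_mul]
  by_cases hst : s = t
  · subst hst
    by_cases hsk : s = k
    · subst hsk
      by_cases hsl : s = l
      · subst hsl; simp
      · simp [hsl, Ne.symm hsl, diag s j₀ hsl hj₀]
    · simp [Ne.symm hsk, (diag i₀ s hi₀ hsk).symm.trans (diag i₀ j₀ hi₀ hj₀)]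
  · by_cases hsk : s = k
    · subst hsk
      by_cases htl : t = l
      · subst htl; simp [hst]
      · simp [hst, Ne.symm htl, off_col s t hst htl]
    · simp [hst, Ne.symm hsk, off_row s t hst hsk]

theorem exists_eq_mul_trace_of_map_lie_eq_zero [Nonempty ι] (φ : Matrix ι ι K →ₗ[K] K)
    (hφ : ∀ x y : Matrix ι ι K, φ ⁅x, y⁆ = 0) : ∃ β, ∀ x, φ x = β * trace x := by
  obtain ⟨r⟩ := ‹Nonempty ι›
  suffices h : φ = φ (single r r 1) • traceLinearMap ι K K from
    ⟨_, fun x => by simpa using LinearMap.congr_fun h x⟩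
  refine linearMap_ext_single fun p q => ?_
  by_cases hpq : p = q
  · subst hpq
    have h := hφ (single p r 1) (single r p 1)
    simp only [single_lie_single, if_pos, map_sub, sub_eq_zero] at h
    simp [h]
  · have h := hφ (single p q 1) (single q q 1)
    simp only [single_lie_single, ↓reduceIte, Ne.symm hpq, sub_zero] at h
    simp [h, trace_single_eq_of_ne _ _ _ hpq]

section InnerInBothArguments

variable [Nontrivial ι] (g : Matrix ι ι K →ₗ[K] Matrix ι ι K →ₗ[K] Matrix ι ι K)
  {A C : Matrix ι ι K → Matrix ι ι K}

theorem exists_apply_single_eq_smul_lie (hA : ∀ x y, g x y = ⁅A y, x⁆)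
    (hC : ∀ x y, g x y = ⁅C x, y⁆) (k l : ι) :
    ∃ β : K, ∀ x, g x (single k l 1) = β • ⁅single k l (1 : K), x⁆ := by
  have hmem : A (single k l 1) ∈ Set.centralizer (Set.centralizer {single k l (1 : K)}) := by
    refine Set.mem_centralizer_iff.mpr fun z hz => ?_
    have hcomm : ⁅single k l (1 : K), z⁆ = 0 := by
      rw [Ring.lie_def, Set.mem_centralizer_iff.mp hz _ rfl, sub_self]
    have := lie_eq_zero_of_forall_lie_eq_lie (fun x => (hA x _).symm.trans (hC x _)) hcomm
    rwa [Ring.lie_def, sub_eq_zero, eq_comm] at this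
  obtain ⟨α, β, h⟩ := exists_eq_smul_one_add_smul_single_of_mem_centralizer hmem
  refine ⟨β, fun x => ?_⟩
  rw [hA, h, add_lie, smul_lie, smul_lie, Ring.lie_def (1 : Matrix ι ι K), one_mul, mul_one,
    sub_self, smul_zero, zero_add]

theorem exists_eq_smul_lie_of_forall_eq_lie (hA : ∀ x y, g x y = ⁅A y, x⁆)
    (hC : ∀ x y, g x y = ⁅C x, y⁆) : ∃ c : K, ∀ x y, g x y = c • ⁅x, y⁆ := by
  choose β hβ using exists_apply_single_eq_smul_lie g hA hC
  choose ν hν using exists_apply_single_eq_smul_lie g.flip (A := C) (C := A)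
    (fun x y => hC y x) (fun x y => hA y x)
  have link : ∀ i j k l s t,
      (β k l + ν i j) * ⁅single i j (1 : K), single k l (1 : K)⁆ s t = 0 := by
    intro i j k l s t
    have h := (hβ k l (single i j 1)).symm.trans (hν i j (single k l 1))
    rw [← lie_skew, smul_neg, neg_eq_iff_add_eq_zero, ← add_smul] at h
    simpa using congr($h s t)
  have step : ∀ i j p q, i ≠ j → β j q = β p i := by
    intro i j p q hij
    have h₁ := link i j j q i q
    have h₂ := link i j p i p j
    simp only [single_lie_single, if_pos, sub_apply, apply_ite (fun m : Matrix ι ι K => m i q),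
      apply_ite (fun m : Matrix ι ι K => m p j), single_apply] at h₁ h₂
    simp only [and_self, ↓reduceIte, hij, Ne.symm hij, false_and, and_false, zero_apply, ite_self,
      sub_zero, zero_sub, mul_one, mul_neg, neg_add_rev] at h₁ h₂
    linear_combination h₁ + h₂
  have const : ∀ a b c d, β a b = β c d := by
    intro a b c d
    by_cases hda : d = a
    · subst hda
      obtain ⟨f, hf⟩ := exists_ne d
      exact (step f d f b hf).trans (step d f c f (Ne.symm hf))
    · exact step d a c b hda
  obtain ⟨r⟩ := (inferInstance : Nonempty ι)
  refine ⟨-β r r, fun x => LinearMap.congr_fun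
    (linearMap_ext_single (g := (-β r r) • LieAlgebra.ad K _ x) fun k l => ?_)⟩
  rw [hβ, const k l r r, LinearMap.smul_apply, neg_smul, LieAlgebra.ad_apply, ← smul_neg, lie_skew]

end InnerInBothArguments

end Matrix

namespace LieDerivation

variable (D : LieDerivation K (Matrix ι ι K) (Matrix ι ι K))

theorem apply_single_lie_single_apply (i j k l s t : ι) :
    D ⁅single i j (1 : K), single k l (1 : K)⁆ s t =
      (if s = i then D (single k l 1) j t else 0) - (if t = j then D (single k l 1) s i else 0)
        + ((if t = l then D (single i j 1) s k else 0)
          - (if s = k then D (single i j 1) l t else 0)) := by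
  rw [D.apply_lie_eq_add, Matrix.add_apply, single_lie_apply, lie_single_apply]

theorem apply_single_eq_smul_single [CharZero K] (hD : ∀ p, D (single p p (1 : K)) = 0)
    {p q : ι} (hpq : p ≠ q) : D (single p q 1) = D (single p q 1) p q • single p q 1 := by
  have hp := D.apply_single_lie_single_apply p p p q
  have hq := D.apply_single_lie_single_apply p q q q
  simp only [single_lie_single, if_pos, if_neg (Ne.symm hpq), sub_zero, hD, Matrix.zero_apply,
    ite_self] at hp hq
  ext s t
  rw [Matrix.smul_apply, single_apply, smul_eq_mul]
  by_cases hs : s = p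
  · subst hs
    by_cases ht : t = q
    · simp [ht]
    · simpa [ht, Ne.symm ht, hpq] using hq s t
  · have h := hp s t
    simp only [hs, if_false, zero_sub, add_zero] at h
    have h0 : D (single p q 1) s t = 0 := by
      split_ifs at h with ht
      · subst ht
        linear_combination h / 2
      · rwa [neg_zero] at h
    simp [h0, Ne.symm hs]

theorem exists_eq_ad_diagonal [CharZero K] [Nonempty ι] (hD : ∀ p, D (single p p (1 : K)) = 0) :
    ∃ d : ι → K, D = ad K _ (diagonal d) := by
  obtain ⟨ω, hω⟩ : ∃ ω : ι → ι → K, ∀ p q, D (single p q 1) p q = ω p q := ⟨_, fun _ _ => rfl⟩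
  have cocycle : ∀ p q r, p ≠ q → q ≠ r → p ≠ r → ω p r = ω p q + ω q r := by
    intro p q r hpq hqr hpr
    have h := D.apply_single_lie_single_apply p q q r p r
    simp only [single_lie_single, ↓reduceIte, hpq, Ne.symm hqr, Ne.symm hpr, sub_zero, hω] at h
    linear_combination h
  have antisymm : ∀ p q, p ≠ q → ω q p = -ω p q := by
    intro p q hpq
    have h := D.apply_single_lie_single_apply p q q p p p
    simp only [single_lie_single, ↓reduceIte, map_sub, hD, Matrix.sub_apply, Matrix.zero_apply,
      sub_self, hω, hpq, sub_zero] at h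
    linear_combination -h
  obtain ⟨r⟩ := ‹Nonempty ι›
  -- `ω p q = ω p r - ω q r`
  refine ⟨fun p => ω p r, LieDerivation.ext fun x => LinearMap.congr_fun
    (linearMap_ext_single (f := (D : Matrix ι ι K →ₗ[K] Matrix ι ι K)) fun p q => ?_) x⟩
  simp only [coeFn_coe, ad_apply_apply, lie_diagonal_single]
  by_cases hpq : p = q
  · simp [hpq, hD]
  rw [D.apply_single_eq_smul_single hD hpq, hω]
  congr 1
  by_cases hpr : p = r
  · subst hpr
    simp [antisymm p q hpq, ← hω, hD]
  by_cases hqr : q = r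
  · subst hqr
    simp [← hω, hD]
  · rw [cocycle p r q hpr (Ne.symm hqr) hpq, antisymm q r hqr]
    ring

theorem apply_single_self_eq_lie [CharZero K] (hD : ∀ x, trace (D x) = 0) (p : ι) :
    D (single p p 1) = ⁅of fun s t => D (single t t (1 : K)) s t, single p p (1 : K)⁆ := by
  have row : ∀ q t, q ≠ p → D (single p p 1) q t =
      (if t = q then D (single p p 1) p p else 0)
        - (if t = p then D (single p q 1) p p else 0) := by
    intro q t hqp
    have h := D.apply_single_lie_single_apply p p p q p t
    simp only [single_lie_single, ↓reduceIte, hqp, sub_zero] at h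
    linear_combination h
  have cross : ∀ p q, q ≠ p → D (single p p 1) q p + D (single q q 1) q p = 0 := by
    intro p q hqp
    have h := D.apply_single_lie_single_apply p p q q q p
    simp only [single_lie_single, Ne.symm hqp, ↓reduceIte, hqp, sub_self, map_zero,
      Matrix.zero_apply, zero_sub] at h
    linear_combination h
  have diag : ∀ q, D (single p p 1) q q = 0 := by
    have const : ∀ q, D (single p p 1) q q = D (single p p 1) p p := fun q => by
      rcases eq_or_ne q p with rfl | hqp
      · rfl
      · simpa [hqp] using row q q hqp
    have h := hD (single p p 1)
    simp only [trace, diag_apply, const, Finset.sum_const, Finset.card_univ, nsmul_eq_mul,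
      mul_eq_zero, Nat.cast_eq_zero] at h
    simpa [h.resolve_left (Fintype.card_pos_iff.mpr ⟨p⟩).ne'] using const
  ext s t
  rw [lie_single_apply, of_apply, of_apply]
  by_cases hs : s = p <;> by_cases ht : t = p
  · subst hs ht; simp [diag]
  · subst hs
    simp only [ht, ↓reduceIte, zero_sub]
    linear_combination cross t s (Ne.symm ht)
  · subst ht; simp [hs]
  · rcases eq_or_ne t s with rfl | hts
    · simp [hs, diag]
    · simpa [hs, ht, hts] using row s t hs

theorem exists_eq_ad_of_trace_apply_eq_zero [CharZero K] [Nonempty ι]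
    (hD : ∀ x, trace (D x) = 0) : ∃ a, D = ad K _ a := by
  set a₀ : Matrix ι ι K := of fun s t => D (single t t 1) s t
  obtain ⟨d, hd⟩ := (D - ad K _ a₀).exists_eq_ad_diagonal
    fun p => by rw [sub_apply, ad_apply_apply, ← D.apply_single_self_eq_lie hD, sub_self]
  exact ⟨a₀ + diagonal d, by rw [map_add, ← hd, add_sub_cancel]⟩

variable (K ι) in
def traceSmulOne : LieDerivation K (Matrix ι ι K) (Matrix ι ι K) where
  toLinearMap := (traceLinearMap ι K K).smulRight 1
  leibniz' a b := by simp [Ring.lie_def, trace_mul_comm a b]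

@[simp]
theorem traceSmulOne_apply (x : Matrix ι ι K) : traceSmulOne ι K x = trace x • 1 := rfl

theorem exists_eq_lie_add_trace_smul_one [CharZero K] [Nonempty ι] :
    ∃ (a : Matrix ι ι K) (β : K), ∀ x, D x = ⁅a, x⁆ + (β * trace x) • 1 := by
  obtain ⟨β, hβ⟩ := exists_eq_mul_trace_of_map_lie_eq_zero
    ((traceLinearMap ι K K) ∘ₗ (D : Matrix ι ι K →ₗ[K] Matrix ι ι K))
    fun x y => by simp [D.apply_lie_eq_add]
  simp only [LinearMap.coe_comp, Function.comp_apply, coeFn_coe, traceLinearMap_apply] at hβ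
  have hcard : (Fintype.card ι : K) ≠ 0 := Nat.cast_ne_zero.mpr Fintype.card_ne_zero
  set c := β / Fintype.card ι
  obtain ⟨a, ha⟩ := (D - c • traceSmulOne ι K).exists_eq_ad_of_trace_apply_eq_zero fun x => by
    simp only [coe_sub, coe_smul, Pi.sub_apply, Pi.smul_apply, traceSmulOne_apply, trace_sub, hβ,
      trace_smul, trace_one, smul_eq_mul, c]
    field_simp
    ring
  refine ⟨a, c, fun x => ?_⟩
  have h := congr($ha x)
  simp only [sub_apply, smul_apply, traceSmulOne_apply, ad_apply_apply, smul_smul] at h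
  rw [← h, sub_add_cancel]

end LieDerivation

theorem exists_eq_mul_of_forall_mul_eq_mul {α : Type*} {τ b d : α → K} {x₀ : α} (h₀ : τ x₀ ≠ 0)
    (h : ∀ x y, b y * τ x = d x * τ y) : ∃ μ, (∀ y, b y = μ * τ y) ∧ ∀ x, d x = μ * τ x := by
  have hbd : b x₀ = d x₀ := mul_right_cancel₀ h₀ (h x₀ x₀)
  refine ⟨d x₀ / τ x₀, fun y => ?_, fun x => ?_⟩
  · field_simp
    linear_combination h x₀ y
  · field_simp
    linear_combination -(h x x₀) + τ x * hbd

theorem exists_eq_trace_mul_trace_smul_one_add_smul_lie [CharZero K] [Nontrivial ι]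
    (f : Matrix ι ι K →ₗ[K] Matrix ι ι K →ₗ[K] Matrix ι ι K)
    (hf₁ : ∀ x y z, f ⁅x, y⁆ z = ⁅x, f y z⁆ + ⁅f x z, y⁆)
    (hf₂ : ∀ x y z, f x ⁅y, z⁆ = ⁅f x y, z⁆ + ⁅y, f x z⁆) :
    ∃ c μ : K, ∀ x y, f x y = (μ * trace x * trace y) • 1 + c • ⁅x, y⁆ := by
  obtain ⟨A, B, hA⟩ : ∃ (A : Matrix ι ι K → Matrix ι ι K) (B : Matrix ι ι K → K),
      ∀ x y, f x y = ⁅A y, x⁆ + (B y * trace x) • 1 := by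
    choose A B h using fun y => LieDerivation.exists_eq_lie_add_trace_smul_one
      ⟨f.flip y, fun x z => by rw [LinearMap.flip_apply, hf₁, ← lie_skew z, sub_neg_eq_add]; rfl⟩
    exact ⟨A, B, fun x y => h y x⟩
  obtain ⟨C, D, hC⟩ : ∃ (C : Matrix ι ι K → Matrix ι ι K) (D : Matrix ι ι K → K),
      ∀ x y, f x y = ⁅C x, y⁆ + (D x * trace y) • 1 := by
    choose C D h using fun x => LieDerivation.exists_eq_lie_add_trace_smul_one
      ⟨f x, fun y z => by rw [hf₂, add_comm, ← lie_skew z, sub_neg_eq_add]⟩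
    exact ⟨C, D, h⟩
  have hcard : (Fintype.card ι : K) ≠ 0 := Nat.cast_ne_zero.mpr Fintype.card_ne_zero
  obtain ⟨μ, hB, hD⟩ := exists_eq_mul_of_forall_mul_eq_mul (τ := trace)
    (x₀ := (1 : Matrix ι ι K)) (by rwa [trace_one]) fun x y => by
      have h := congrArg trace ((hA x y).symm.trans (hC x y))
      simp only [trace_add, trace_smul, trace_one, LieAlgebra.matrix_trace_commutator_zero,
        smul_eq_mul, zero_add] at h
      exact mul_right_cancel₀ hcard h
  let τ := (traceLinearMap ι K K).smulRight ((traceLinearMap ι K K).smulRight (1 : Matrix ι ι K))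
  have hτ : ∀ x y, τ x y = (trace x * trace y) • (1 : Matrix ι ι K) := fun x y => by
    simp [τ, smul_smul]
  obtain ⟨c, hc⟩ := Matrix.exists_eq_smul_lie_of_forall_eq_lie (f - μ • τ) (A := A) (C := C)
    (fun x y => by
      simp only [LinearMap.sub_apply, LinearMap.smul_apply, hτ, hA, hB, smul_smul]
      module)
    (fun x y => by
      simp only [LinearMap.sub_apply, LinearMap.smul_apply, hτ, hC, hD, smul_smul]
      module)
  refine ⟨c, μ, fun x y => ?_⟩
  have h := hc x y
  simp only [LinearMap.sub_apply, LinearMap.smul_apply, hτ, smul_smul, sub_eq_iff_eq_add] at h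
  rw [h, add_comm, mul_assoc]

theorem stmt_15 (n : ℕ) (hn : 2 ≤ n)
    (f : Matrix (Fin n) (Fin n) ℂ →ₗ[ℂ] Matrix (Fin n) (Fin n) ℂ →ₗ[ℂ] Matrix (Fin n) (Fin n) ℂ)
    (hf1 : ∀ x y z : Matrix (Fin n) (Fin n) ℂ,
      f (x * y - y * x) z = (x * f y z - f y z * x) + (f x z * y - y * f x z))
    (hf2 : ∀ x y z : Matrix (Fin n) (Fin n) ℂ,
      f x (y * z - z * y) = (f x y * z - z * f x y) + (y * f x z - f x z * y)) :
    ∃ lam mu : ℂ, ∀ x y : Matrix (Fin n) (Fin n) ℂ,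
      f x y = (mu * x.trace * y.trace) • (1 : Matrix (Fin n) (Fin n) ℂ)
        + lam • (x * y - y * x) := by
  have : Nontrivial (Fin n) := Fin.nontrivial_iff_two_le.mpr hn
  simp only [← Ring.lie_def] at hf1 hf2 ⊢
  exact exists_eq_trace_mul_trace_smul_one_add_smul_lie f hf1 hf2
end

section
/- Let L be a finite dimensional complex simple Lie algebra. A linear map φ : L → L satisfies [φ(x), x] = 0 for all x ∈ L if and only if φ = λ·id for some λ ∈ ℂ. -/
/-!
Polarizing `⁅φ x, x⁆ = 0` gives `⁅φ x, y⁆ = ⁅x, φ y⁆`, so `(x, y) ↦ ⁅φ x, y⁆` is a skew-symmetric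
biderivation. Expanding `⁅φ ⁅x, u⁆, ⁅y, v⁆⁆` with the Leibniz rule in either argument first
(Brešar's trick) and exploiting the resulting symmetries yields
`⁅⁅φ x, y⁆, ⁅u, v⁆⁆ = ⁅⁅x, y⁆, ⁅φ u, v⁆⁆`. Because a simple Lie algebra
is perfect and centreless, this forces `φ ⁅x, y⁆ = ⁅x, φ y⁆`: `φ` is an endomorphism of the
irreducible adjoint module, hence a scalar by Schur's lemma.
-/

section LieRing

variable {L : Type*} [LieRing L]

theorem lie_apply_eq_lie_apply_of_lie_apply_self_eq_zero {F : Type*} [FunLike F L L]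
    [AddHomClass F L L] (φ : F) (h : ∀ x, ⁅φ x, x⁆ = 0) (x y : L) : ⁅φ x, y⁆ = ⁅x, φ y⁆ := by
  have hxy := h (x + y)
  rwa [map_add, add_lie, lie_add, lie_add, h x, h y, zero_add, add_zero,
    add_eq_zero_iff_eq_neg, lie_skew] at hxy

variable {φ : L → L}

theorem apply_lie_lie_eq_add (hφ : ∀ x y, ⁅φ x, y⁆ = ⁅x, φ y⁆) (a b t : L) :
    ⁅φ ⁅a, b⁆, t⁆ = ⁅⁅φ a, t⁆, b⁆ + ⁅a, ⁅φ b, t⁆⁆ := by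
  rw [hφ, lie_lie, ← hφ a, ← hφ b, ← lie_skew ⁅φ a, t⁆]
  abel

theorem lie_lie_apply_add_lie_lie_apply (hφ : ∀ x y, ⁅φ x, y⁆ = ⁅x, φ y⁆) (x y u v : L) :
    ⁅⁅φ x, y⁆, ⁅u, v⁆⁆ + ⁅⁅u, y⁆, ⁅φ x, v⁆⁆ = ⁅⁅x, y⁆, ⁅φ u, v⁆⁆ + ⁅⁅φ u, y⁆, ⁅x, v⁆⁆ := by
  have h₁ : ⁅φ ⁅x, u⁆, ⁅y, v⁆⁆
      = ⁅⁅⁅φ x, y⁆, u⁆, v⁆ + ⁅⁅x, ⁅φ u, y⁆⁆, v⁆ + ⁅y, ⁅⁅φ x, v⁆, u⁆⁆ + ⁅y, ⁅x, ⁅φ u, v⁆⁆⁆ := by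
    rw [leibniz_lie, apply_lie_lie_eq_add hφ, apply_lie_lie_eq_add hφ, add_lie, lie_add]
    abel
  have h₂ : ⁅φ ⁅x, u⁆, ⁅y, v⁆⁆
      = ⁅⁅⁅φ x, y⁆, v⁆, u⁆ + ⁅⁅y, ⁅φ x, v⁆⁆, u⁆ + ⁅x, ⁅⁅φ u, y⁆, v⁆⁆ + ⁅x, ⁅y, ⁅φ u, v⁆⁆⁆ := by
    rw [apply_lie_lie_eq_add hφ, leibniz_lie (φ x), leibniz_lie (φ u), add_lie, lie_add]
    abel
  rw [leibniz_lie ⁅φ x, y⁆, lie_lie u y, lie_lie x y, leibniz_lie ⁅φ u, y⁆ x,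
    ← lie_skew u ⁅⁅φ x, y⁆, v⁆, ← lie_skew u ⁅y, ⁅φ x, v⁆⁆, ← lie_skew u ⁅φ x, v⁆, lie_neg,
    ← lie_skew ⁅φ u, y⁆ x, neg_lie, ← sub_eq_zero, ← sub_eq_zero_of_eq (h₁.symm.trans h₂)]
  abel

/-- Since `((1 2)(1 3))³ = 1`, applying the two symmetries alternately six times gives
`F = -F`. -/
theorem eq_zero_of_symm₁₃_of_antisymm₁₂ {α A : Type*} [AddGroup A] [IsAddTorsionFree A]
    {F : α → α → α → A} (h₁₃ : ∀ a b c, F a b c = F c b a) (h₁₂ : ∀ a b c, F a b c = -F b a c)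
    (a b c : α) : F a b c = 0 := by
  rw [← self_eq_neg]
  calc F a b c = F c b a := h₁₃ a b c
    _ = -F b c a := h₁₂ c b a
    _ = -F a c b := by rw [h₁₃ b c a]
    _ = F c a b := by rw [h₁₂ a c b, neg_neg]
    _ = F b a c := h₁₃ c a b
    _ = -F a b c := h₁₂ b a c

theorem lie_lie_apply_lie_eq [IsAddTorsionFree L] (hφ : ∀ x y, ⁅φ x, y⁆ = ⁅x, φ y⁆)
    (x y u v : L) : ⁅⁅φ x, y⁆, ⁅u, v⁆⁆ = ⁅⁅x, y⁆, ⁅φ u, v⁆⁆ := by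
  rw [← sub_eq_zero]
  refine eq_zero_of_symm₁₃_of_antisymm₁₂
    (F := fun x y u => ⁅⁅φ x, y⁆, ⁅u, v⁆⁆ - ⁅⁅x, y⁆, ⁅φ u, v⁆⁆) (fun x y u => ?_)
    (fun x y u => ?_) x y u
  · rw [sub_eq_sub_iff_add_eq_add, lie_lie_apply_add_lie_lie_apply hφ, add_comm]
  · rw [hφ y, ← lie_skew (φ x) y, ← lie_skew x y, ← hφ, neg_lie, neg_lie, neg_sub_neg, neg_sub]

end LieRing

section LieAlgebra

open LieAlgebra

variable {R L : Type*} [CommRing R] [LieRing L] [LieAlgebra R L]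

theorem LieAlgebra.IsSimple.derivedSeries_one_eq_top [IsSimple R L] : derivedSeries R L 1 = ⊤ := by
  refine (IsSimple.eq_bot_or_eq_top _).resolve_left fun h => ?_
  rw [derivedSeries_def, ← abelian_iff_derived_one_eq_bot,
    lie_abelian_iff_equiv_lie_abelian (LieIdeal.topEquiv (R := R) (L := L))] at h
  exact IsSimple.non_abelian R h

theorem LieAlgebra.eq_zero_of_forall_lie_eq_zero (hc : center R L = ⊥) {z : L}
    (hz : ∀ w : L, ⁅z, w⁆ = 0) : z = 0 := by
  rw [← LieSubmodule.mem_bot (R := R) (L := L), ← hc, LieModule.mem_maxTrivSubmodule]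
  intro w
  rw [← lie_skew, hz, neg_zero]

theorem LieAlgebra.eq_zero_of_forall_lie_lie_eq_zero (hc : center R L = ⊥)
    (hp : derivedSeries R L 1 = ⊤) {z : L} (hz : ∀ u v : L, ⁅z, ⁅u, v⁆⁆ = 0) : z = 0 := by
  refine eq_zero_of_forall_lie_eq_zero hc fun w => ?_
  have hw : w ∈ Submodule.span R {⁅u, v⁆ | (u : L) (v : L)} := by
    rw [← coe_derivedSeries_one_eq, hp]
    trivial
  refine (Submodule.span_le (p := LinearMap.ker (ad R L z))).2 ?_ hw
  rintro _ ⟨u, v, rfl⟩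
  exact hz u v

variable {φ : L → L}

theorem apply_lie_lie_eq_sub [IsAddTorsionFree L] (hφ : ∀ x y, ⁅φ x, y⁆ = ⁅x, φ y⁆)
    (hc : center R L = ⊥) (hp : derivedSeries R L 1 = ⊤) (x y w : L) :
    ⁅φ ⁅x, y⁆, w⁆ = ⁅φ x, ⁅y, w⁆⁆ - ⁅φ y, ⁅x, w⁆⁆ := by
  suffices h : ⁅φ ⁅x, y⁆, w⁆ - ⁅φ x, ⁅y, w⁆⁆ + ⁅φ y, ⁅x, w⁆⁆ = 0 by
    rw [← sub_eq_zero, ← h]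
    abel
  refine eq_zero_of_forall_lie_lie_eq_zero hc hp fun u v => ?_
  rw [add_lie, sub_lie, lie_lie_apply_lie_eq hφ, lie_lie_apply_lie_eq hφ,
    lie_lie_apply_lie_eq hφ, ← sub_lie, ← add_lie, lie_lie x y w, sub_sub_cancel_left,
    neg_add_cancel, zero_lie]

theorem apply_lie_eq_lie_apply [IsAddTorsionFree L] (hφ : ∀ x y, ⁅φ x, y⁆ = ⁅x, φ y⁆)
    (hc : center R L = ⊥) (hp : derivedSeries R L 1 = ⊤) (x y : L) :
    φ ⁅x, y⁆ = ⁅x, φ y⁆ := by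
  rw [← hφ, ← sub_eq_zero]
  refine eq_zero_of_forall_lie_eq_zero hc fun w => ?_
  have h := apply_lie_lie_eq_sub hφ hc hp x y w
  have hyx : ⁅φ y, x⁆ = -⁅φ x, y⁆ := by rw [hφ, ← lie_skew y (φ x)]
  have hxyw : ⁅y, ⁅x, φ w⁆⁆ - ⁅x, ⁅y, φ w⁆⁆ = -⁅φ ⁅x, y⁆, w⁆ := by rw [hφ, lie_lie]; abel
  -- together with `hxyw`, `h` says `2 • ⁅φ ⁅x, y⁆, w⁆ = 2 • ⁅⁅φ x, y⁆, w⁆`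
  rw [leibniz_lie (φ x), leibniz_lie (φ y), hyx, hφ x w, hφ y w, neg_lie] at h
  rw [sub_lie, ← self_eq_neg]
  linear_combination (norm := abel) h + hxyw

end LieAlgebra

theorem LieModule.exists_eq_smul_of_isIrreducible {K L M : Type*} [Field K] [IsAlgClosed K]
    [LieRing L] [LieAlgebra K L] [AddCommGroup M] [Module K M] [LieRingModule L M]
    [LieModule K L M] [FiniteDimensional K M] [LieModule.IsIrreducible K L M]
    (f : M →ₗ⁅K, L⁆ M) : ∃ c : K, ∀ m, f m = c • m := by
  have := LieModule.nontrivial_of_isIrreducible K L M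
  obtain ⟨c, hc⟩ := Module.End.exists_eigenvalue (f : Module.End K M)
  let E : LieSubmodule K L M :=
    { toSubmodule := Module.End.eigenspace (f : Module.End K M) c
      lie_mem := fun {x m} hm => by
        change m ∈ Module.End.eigenspace _ c at hm
        change ⁅x, m⁆ ∈ Module.End.eigenspace _ c
        rw [Module.End.mem_eigenspace_iff] at hm ⊢
        rw [LieModuleHom.coe_toLinearMap, LieModuleHom.map_lie, ← LieModuleHom.coe_toLinearMap,
          hm, lie_smul] }
  rcases IsSimpleOrder.eq_bot_or_eq_top E with hE | hE
  · obtain ⟨v, hv⟩ := hc.exists_hasEigenvector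
    have hvE : v ∈ E := hv.1
    rw [hE, LieSubmodule.mem_bot] at hvE
    exact absurd hvE hv.2
  · exact ⟨c, fun m => Module.End.mem_eigenspace_iff.1 (hE ▸ LieSubmodule.mem_top m : m ∈ E)⟩

theorem stmt_16 {L : Type*} [LieRing L] [LieAlgebra ℂ L]
    [FiniteDimensional ℂ L] [LieAlgebra.IsSimple ℂ L]
    (φ : L →ₗ[ℂ] L) :
    (∀ x : L, ⁅φ x, x⁆ = 0) ↔ ∃ lam : ℂ, ∀ x : L, φ x = lam • x := by
  refine ⟨fun h => ?_, fun ⟨c, hc⟩ x => by rw [hc, smul_lie, lie_self, smul_zero]⟩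
  have := IsAddTorsionFree.of_isTorsionFree ℂ L
  have hφ := lie_apply_eq_lie_apply_of_lie_apply_self_eq_zero φ h
  have hcomm := apply_lie_eq_lie_apply hφ (LieAlgebra.center_eq_bot ℂ L)
    LieAlgebra.IsSimple.derivedSeries_one_eq_top
  exact LieModule.exists_eq_smul_of_isIrreducible (K := ℂ) { φ with map_lie' := hcomm _ _ }
end

section
/- A linear map φ on gl_n(ℂ) (n ≥ 2) satisfies [φ(x), x] = 0 for all x if and only if there exist λ ∈ ℂ and a linear functional σ : gl_n(ℂ) → ℂ such that φ(x) = σ(x)·I_n + λ·x for all x ∈ gl_n(ℂ). -/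
/-!
Polarizing `[φ x, x] = 0` gives `φ x * y + φ y * x = y * φ x + x * φ y`, and reading this
identity entrywise on pairs of matrix units `E i j = single i j 1` and `E k l` shows that
`φ (E i j)` is a multiple of `1` plus `c • E i j`, where the coefficient `c = φ (E i j) i j`
(for `i ≠ j`) does not depend on `i`, `j`. So `ψ = φ - c • id` is again commuting and sends
every matrix unit, hence every matrix, to a scalar matrix; `σ` reads off that scalar.
-/

theorem commute_polarization {A F : Type*} [Ring A] [FunLike F A A] [AddHomClass F A A] (φ : F)
    (hφ : ∀ x, Commute (φ x) x) (x y : A) :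
    φ x * y + φ y * x = y * φ x + x * φ y := by
  have hxy := (hφ (x + y)).eq
  rw [map_add] at hxy
  calc φ x * y + φ y * x
      = (φ x + φ y) * (x + y) - φ x * x - φ y * y := by noncomm_ring
    _ = (x + y) * (φ x + φ y) - x * φ x - y * φ y := by rw [hxy, (hφ x).eq, (hφ y).eq]
    _ = y * φ x + x * φ y := by noncomm_ring

namespace Matrix

theorem mul_single_apply {l m n α : Type*} [Fintype m] [DecidableEq m] [DecidableEq n]
    [NonUnitalNonAssocSemiring α] (M : Matrix l m α) (i : m) (j : n) (c : α) (p : l) (q : n) :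
    (M * single i j c) p q = if q = j then M p i * c else 0 := by
  split_ifs with hq
  · rw [hq, mul_single_apply_same]
  · exact mul_single_apply_of_ne (hbj := hq) ..

theorem single_mul_apply {l m n α : Type*} [Fintype m] [DecidableEq l] [DecidableEq m]
    [NonUnitalNonAssocSemiring α] (M : Matrix m n α) (i : l) (j : m) (c : α) (p : l) (q : n) :
    (single i j c * M) p q = if p = i then c * M j q else 0 := by
  split_ifs with hp
  · rw [hp, single_mul_apply_same]
  · exact single_mul_apply_of_ne (h := hp) ..

variable {ι R : Type*} [Fintype ι] [DecidableEq ι] [CommRing R]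

section CommutingMap

variable (φ : Matrix ι ι R →ₗ[R] Matrix ι ι R) (hφ : ∀ x, Commute (φ x) x)
include hφ

theorem commuting_single_apply (i j p q : ι) :
    (if q = j then φ (single i j 1) p i else 0) =
      (if p = i then φ (single i j 1) j q else 0) := by
  simpa [mul_single_apply, single_mul_apply] using congrFun₂ (hφ (single i j 1)).eq p q

theorem commuting_polarization_single_apply (i j k l p q : ι) :
    (if q = l then φ (single i j 1) p k else 0) + (if q = j then φ (single k l 1) p i else 0) =
      (if p = k then φ (single i j 1) l q else 0) +
        (if p = i then φ (single k l 1) j q else 0) := by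
  simpa [mul_single_apply, single_mul_apply] using
    congrFun₂ (commute_polarization φ hφ (single i j 1) (single k l 1)) p q

theorem commuting_single_apply_left_eq_zero {i j p : ι} (hp : p ≠ i) :
    φ (single i j 1) p i = 0 := by
  simpa [hp] using commuting_single_apply φ hφ i j p j

theorem commuting_single_apply_right_eq_zero {i j q : ι} (hq : q ≠ j) :
    φ (single i j 1) j q = 0 := by
  simpa [hq] using (commuting_single_apply φ hφ i j i q).symm

theorem commuting_single_apply_eq_zero {i j p q : ι} (hpq : p ≠ q) (hne : ¬(p = i ∧ q = j)) :
    φ (single i j 1) p q = 0 := by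
  by_cases hqj : q = j
  · subst hqj
    have hpi : p ≠ i := fun h => hne ⟨h, rfl⟩
    simpa [Ne.symm hpq, hpi, commuting_single_apply_right_eq_zero φ hφ (Ne.symm hpi)] using
      (commuting_polarization_single_apply φ hφ i q p p p q).symm
  by_cases hqi : q = i
  · subst hqi
    exact commuting_single_apply_left_eq_zero φ hφ hpq
  by_cases hpi : p = i
  · subst hpi
    simpa [hqj, hpq, commuting_single_apply_left_eq_zero φ hφ (Ne.symm hqj)] using
      commuting_polarization_single_apply φ hφ p j q q p q
  · simpa [hqj, hpq, hpi] using commuting_polarization_single_apply φ hφ i j q q p q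

theorem commuting_single_apply_diag_of_ne {i j : ι} (hij : i ≠ j) (p : ι) :
    φ (single i j 1) p p = φ (single i j 1) j j := by
  by_cases hpj : p = j
  · rw [hpj]
  · simpa [hpj, Ne.symm hij, hij] using
      (commuting_polarization_single_apply φ hφ i j j p j p).symm

theorem commuting_single_self_apply_diag {i p : ι} (hpi : p ≠ i) :
    φ (single i i 1) i i = φ (single i i 1) p p + φ (single i p 1) i p := by
  simpa [hpi] using commuting_polarization_single_apply φ hφ i i i p i p

theorem commuting_single_apply_self_eq {i j k l : ι} (hij : i ≠ j) (hkl : k ≠ l) :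
    φ (single i j 1) i j = φ (single k l 1) k l := by
  have chain : ∀ {i j l : ι}, i ≠ j → j ≠ l →
      φ (single i j 1) i j = φ (single j l 1) j l :=
    fun {i j l} hij hjl => by
      simpa [hij, Ne.symm hjl] using commuting_polarization_single_apply φ hφ i j j l i l
  by_cases hjk : j = k
  · subst hjk
    exact chain hij hkl
  · exact (chain hij hjk).trans (chain hjk hkl)

variable (hcoeff : ∀ k l, k ≠ l → φ (single k l 1) k l = 0)
include hcoeff

theorem commuting_single_apply_diag (i j p k : ι) :
    φ (single i j 1) p p = φ (single i j 1) k k := by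
  suffices h : ∀ p, φ (single i j 1) p p = φ (single i j 1) j j by rw [h p, h k]
  intro p
  by_cases hij : i = j
  · subst hij
    by_cases hpi : p = i
    · rw [hpi]
    · rw [commuting_single_self_apply_diag φ hφ hpi, hcoeff i p (Ne.symm hpi), add_zero]
  · exact commuting_single_apply_diag_of_ne φ hφ hij p

theorem commuting_single_eq_smul_one (i j k : ι) :
    φ (single i j 1) = φ (single i j 1) k k • (1 : Matrix ι ι R) := by
  ext p q
  by_cases hpq : p = q
  · subst hpq
    simp [commuting_single_apply_diag φ hφ hcoeff i j p k]
  rw [smul_apply, one_apply_ne hpq, smul_zero]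
  by_cases hij : p = i ∧ q = j
  · obtain ⟨rfl, rfl⟩ := hij
    exact hcoeff p q hpq
  · exact commuting_single_apply_eq_zero φ hφ hpq hij

theorem commuting_eq_smulRight_one (k : ι) :
    φ = (entryLinearMap R R k k ∘ₗ φ).smulRight 1 :=
  ext_linearMap (R := R) fun i j => LinearMap.ext_ring <| by
    simpa using commuting_single_eq_smul_one φ hφ hcoeff i j k

end CommutingMap

theorem commuting_iff_eq_smul_one_add_smul [Nontrivial ι] (φ : Matrix ι ι R →ₗ[R] Matrix ι ι R) :
    (∀ x, Commute (φ x) x) ↔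
      ∃ (c : R) (σ : Matrix ι ι R →ₗ[R] R), ∀ x, φ x = σ x • 1 + c • x := by
  refine ⟨fun hφ => ?_, fun ⟨c, σ, hσ⟩ x => ?_⟩
  · obtain ⟨i₀, i₁, hi⟩ := exists_pair_ne ι
    set c := φ (single i₀ i₁ 1) i₀ i₁
    set ψ := φ - c • LinearMap.id
    have hψ : ∀ x, Commute (ψ x) x := fun x => (hφ x).sub_left ((Commute.refl x).smul_left c)
    have hcoeff : ∀ k l, k ≠ l → ψ (single k l 1) k l = 0 := fun k l hkl => by
      simp [ψ, commuting_single_apply_self_eq φ hφ hkl hi, c]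
    refine ⟨c, entryLinearMap R R i₀ i₀ ∘ₗ ψ, fun x => ?_⟩
    rw [← LinearMap.smulRight_apply, ← commuting_eq_smulRight_one ψ hψ hcoeff]
    simp [ψ]
  · rw [hσ x]
    exact ((Commute.one_left x).smul_left _).add_left ((Commute.refl x).smul_left c)

end Matrix

theorem stmt_17 (n : ℕ) (hn : 2 ≤ n)
    (φ : Matrix (Fin n) (Fin n) ℂ →ₗ[ℂ] Matrix (Fin n) (Fin n) ℂ) :
    (∀ x : Matrix (Fin n) (Fin n) ℂ, φ x * x - x * φ x = 0) ↔
    ∃ (lam : ℂ) (σ : Matrix (Fin n) (Fin n) ℂ →ₗ[ℂ] ℂ),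
      ∀ x : Matrix (Fin n) (Fin n) ℂ,
        φ x = σ x • (1 : Matrix (Fin n) (Fin n) ℂ) + lam • x := by
  have : Nontrivial (Fin n) := Fin.nontrivial_iff_two_le.mpr hn
  simp only [sub_eq_zero]
  exact Matrix.commuting_iff_eq_smul_one_add_smul φ
end
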